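/- For real s > 1 and integers p₁, p₂ ≥ 2: ∑_{i=0}^{p₂-1} C(p₁-1+i, i) ζ(p₁+i, p₂-i, s) + ∑_{i=0}^{p₁-1} C(p₂-1+i, i) ∑_{l,m,n≥1} (l+m+n)^{-(p₂+i)} l^{-(p₁-i)} m^{-s} = ζ(p₁, p₂, s) + ζ(p₂, p₁, s) + ζ(p₂, s, p₁) + ζ(p₁+p₂, s) + ζ(p₂, p₁+s). -/

import Mathlib

/-- The double zeta function `ζ(s₁, s₂) = ∑_{m₁ > m₂ > 0} m₁^{-s₁} m₂^{-s₂}`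
with real arguments. -/
noncomputable def zr2 (s₁ s₂ : ℝ) : ℝ :=
  ∑' (a : ℕ) (b : ℕ),
    ((a : ℝ) + (b : ℝ) + 2) ^ (-s₁) * ((b : ℝ) + 1) ^ (-s₂)

/-- The triple zeta function `ζ(s₁, s₂, s₃) = ∑_{m₁ > m₂ > m₃ > 0} ∏ m_j^{-s_j}`
with real arguments. -/
noncomputable def zr3 (s₁ s₂ s₃ : ℝ) : ℝ :=
  ∑' (a : ℕ) (b : ℕ) (c : ℕ),
    ((a : ℝ) + (b : ℝ) + (c : ℝ) + 3) ^ (-s₁) *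
      ((b : ℝ) + (c : ℝ) + 2) ^ (-s₂) * ((c : ℝ) + 1) ^ (-s₃)

/-!
Both sides are decompositions of the product `ζ(p₁) · ζ(p₂, s)`. Multiplying out
`∑_k k^{-p₁} · ∑_{n > r} n^{-p₂} r^{-s}` and sorting the position of `k` relative to `r < n` into
five cases gives the right-hand side (the harmonic product). Applying instead Euler's partial
fraction decomposition of `k^{-p₁} n^{-p₂}` into powers of `k + n` gives the left-hand side
(the shuffle product). All series have nonnegative terms, so the rearrangements are carried out
in `ℝ≥0∞` and transferred back to `ℝ` once the product is known to be finite.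
-/

open Finset Function
open scoped ENNReal

theorem one_sub_mul_sum_choose {R : Type*} [CommRing R] (u : R) (p q : ℕ) :
    (1 - u) * ∑ i ∈ range (p + 1), ((q + 1 + i).choose i : R) * u ^ i =
      ∑ i ∈ range (p + 1), ((q + i).choose i : R) * u ^ i -
        ((q + 1 + p).choose p : R) * u ^ (p + 1) := by
  induction p with
  | zero => simp
  | succ p ih =>
    have pascal : ((q + 1 + (p + 1)).choose (p + 1) : R) =
        (q + 1 + p).choose p + (q + (p + 1)).choose (p + 1) := by
      rw [show q + 1 + (p + 1) = q + 1 + p + 1 by ring, Nat.choose_succ_succ,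
        show q + 1 + p = q + (p + 1) by ring]
      push_cast; ring
    rw [sum_range_succ, sum_range_succ (fun i => ((q + i).choose i : R) * u ^ i)]
    linear_combination ih + u ^ (p + 1) * pascal

theorem pow_mul_sum_choose_add_eq_one {R : Type*} [CommRing R] (u : R) (p q : ℕ) :
    u ^ (p + 1) * ∑ i ∈ range (q + 1), ((p + i).choose i : R) * (1 - u) ^ i +
      (1 - u) ^ (q + 1) * ∑ i ∈ range (p + 1), ((q + i).choose i : R) * u ^ i = 1 := by
  induction q with
  | zero =>
    simp only [zero_add, sum_range_one, Nat.choose_zero_right, Nat.choose_self, pow_zero,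
      Nat.cast_one, one_mul, mul_one, pow_one]
    linear_combination -geom_sum_mul u (p + 1)
  | succ q ih =>
    have symm : ((q + 1 + p).choose p : R) = (p + (q + 1)).choose (q + 1) := by
      rw [add_comm (q + 1) p, Nat.choose_symm_add]
    rw [sum_range_succ (fun i => ((p + i).choose i : R) * (1 - u) ^ i)]
    linear_combination ih + (1 - u) ^ (q + 1) * one_sub_mul_sum_choose u p q -
      u ^ (p + 1) * (1 - u) ^ (q + 1) * symm

theorem inv_pow_mul_inv_pow_mul_div_pow_mul_div_pow {K : Type*} [Field K] {x y : K}
    (hx : x ≠ 0) (hy : y ≠ 0) (hxy : x + y ≠ 0) (p : ℕ) {q i : ℕ} (hi : i ≤ q) :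
    (x ^ (p + 1))⁻¹ * (y ^ (q + 1))⁻¹ * ((x / (x + y)) ^ (p + 1) * (y / (x + y)) ^ i) =
      ((x + y) ^ (p + 1 + i))⁻¹ * (y ^ (q + 1 - i))⁻¹ := by
  obtain ⟨j, rfl⟩ := Nat.exists_eq_add_of_le hi
  rw [show i + j + 1 - i = j + 1 by omega, div_pow, div_pow]
  field_simp
  ring

/-- Euler's partial fraction decomposition. -/
theorem inv_pow_mul_inv_pow_eq_sum {K : Type*} [Field K] {x y : K} (hx : x ≠ 0) (hy : y ≠ 0)
    (hxy : x + y ≠ 0) (p q : ℕ) :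
    (x ^ (p + 1))⁻¹ * (y ^ (q + 1))⁻¹ =
      ∑ i ∈ range (q + 1), ((p + i).choose i : K) *
          (((x + y) ^ (p + 1 + i))⁻¹ * (y ^ (q + 1 - i))⁻¹) +
        ∑ i ∈ range (p + 1), ((q + i).choose i : K) *
          (((x + y) ^ (q + 1 + i))⁻¹ * (x ^ (p + 1 - i))⁻¹) := by
  have key := pow_mul_sum_choose_add_eq_one (x / (x + y)) p q
  rw [show 1 - x / (x + y) = y / (x + y) by field_simp; ring] at key
  rw [← mul_one ((x ^ (p + 1))⁻¹ * (y ^ (q + 1))⁻¹), ← key, mul_add, mul_sum, mul_sum, mul_sum,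
    mul_sum]
  congr 1 <;> refine sum_congr rfl fun i hi => ?_
  · rw [← inv_pow_mul_inv_pow_mul_div_pow_mul_div_pow hx hy hxy p
      (Nat.lt_succ_iff.mp (mem_range.mp hi))]
    ring
  · rw [add_comm x y, ← inv_pow_mul_inv_pow_mul_div_pow_mul_div_pow hy hx (by rwa [add_comm]) q
      (Nat.lt_succ_iff.mp (mem_range.mp hi))]
    ring

theorem tsum_comp_eq_tsum_indicator {α β M : Type*} [AddCommMonoid M] [TopologicalSpace M]
    {φ : β → α} {ψ : α → β} {R : Set α} (hψ : LeftInverse ψ φ) (hR : ∀ x, x ∈ R ↔ φ (ψ x) = x)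
    (F : α → M) : ∑' y, F (φ y) = ∑' x, R.indicator F x := by
  obtain rfl : Set.range φ = R := Set.ext fun x =>
    ⟨by rintro ⟨y, rfl⟩; rw [hR, hψ], fun hx => ⟨ψ x, (hR x).mp hx⟩⟩
  rw [← hψ.injective.tsum_eq Set.support_indicator_subset]
  exact tsum_congr fun y => (Set.indicator_of_mem (Set.mem_range_self y) F).symm

theorem ENNReal.tsum₂_toReal_eq {α β : Type*} {f : α → β → ℝ≥0∞} (hf : ∑' (a) (b), f a b ≠ ∞) :
    (∑' (a) (b), f a b).toReal = ∑' (a) (b), (f a b).toReal := by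
  rw [ENNReal.tsum_toReal_eq (ENNReal.ne_top_of_tsum_ne_top hf)]
  exact tsum_congr fun a =>
    ENNReal.tsum_toReal_eq (ENNReal.ne_top_of_tsum_ne_top (ENNReal.ne_top_of_tsum_ne_top hf a))

theorem ENNReal.tsum₃_toReal_eq {α β γ : Type*} {f : α → β → γ → ℝ≥0∞}
    (hf : ∑' (a) (b) (c), f a b c ≠ ∞) :
    (∑' (a) (b) (c), f a b c).toReal = ∑' (a) (b) (c), (f a b c).toReal := by
  rw [ENNReal.tsum_toReal_eq (ENNReal.ne_top_of_tsum_ne_top hf)]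
  exact tsum_congr fun a => ENNReal.tsum₂_toReal_eq (ENNReal.ne_top_of_tsum_ne_top hf a)

theorem ENNReal.toReal_sum_natCast_mul {ι : Type*} {s : Finset ι} {c : ι → ℕ} {N : ι → ℝ≥0∞}
    (h : ∑ i ∈ s, (c i : ℝ≥0∞) * N i ≠ ∞) :
    (∑ i ∈ s, (c i : ℝ≥0∞) * N i).toReal = ∑ i ∈ s, (c i : ℝ) * (N i).toReal := by
  rw [ENNReal.toReal_sum (ENNReal.sum_ne_top.mp h)]
  simp only [ENNReal.toReal_mul, ENNReal.toReal_natCast]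

theorem ne_top_of_sum_choose_mul_ne_top {p : ℕ} {s : Finset ℕ} {N : ℕ → ℝ≥0∞}
    (h : ∑ i ∈ s, ((p + i).choose i : ℝ≥0∞) * N i ≠ ∞) {i : ℕ} (hi : i ∈ s) : N i ≠ ∞ :=
  fun hN => ENNReal.sum_ne_top.mp h i hi <| by
    rw [hN, ENNReal.mul_top (Nat.cast_ne_zero.mpr (Nat.choose_pos (Nat.le_add_left i p)).ne')]

/-- Index `n` stands for the positive integer `n + 1`. -/
noncomputable def zetaTerm (t : ℝ) (n : ℕ) : ℝ≥0∞ := ENNReal.ofReal (((n : ℝ) + 1) ^ (-t))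

theorem zetaTerm_ne_top (t : ℝ) (n : ℕ) : zetaTerm t n ≠ ∞ := ENNReal.ofReal_ne_top

theorem toReal_zetaTerm (t : ℝ) (n : ℕ) : (zetaTerm t n).toReal = ((n : ℝ) + 1) ^ (-t) :=
  ENNReal.toReal_ofReal (by positivity)

theorem zetaTerm_natCast (k n : ℕ) : zetaTerm k n = ENNReal.ofReal ((((n : ℝ) + 1) ^ k)⁻¹) := by
  rw [zetaTerm, Real.rpow_neg (by positivity), Real.rpow_natCast]

theorem zetaTerm_mul (s t : ℝ) : zetaTerm s * zetaTerm t = zetaTerm (s + t) := by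
  ext n
  rw [Pi.mul_apply, zetaTerm, zetaTerm, zetaTerm, ← ENNReal.ofReal_mul (by positivity),
    ← Real.rpow_add (by positivity), neg_add]

theorem antitone_zetaTerm {t : ℝ} (ht : 0 ≤ t) : Antitone (zetaTerm t) := fun m n hmn =>
  ENNReal.ofReal_le_ofReal <| Real.rpow_le_rpow_of_nonpos (by positivity)
    (by gcongr) (neg_nonpos.mpr ht)

theorem tsum_zetaTerm_ne_top {t : ℝ} (ht : 1 < t) : ∑' n, zetaTerm t n ≠ ∞ := by
  have hsum : Summable fun n : ℕ => ((n : ℝ) + 1) ^ (-t) := by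
    refine ((summable_nat_add_iff 1).mpr (Real.summable_nat_rpow_inv.mpr ht)).congr fun n => ?_
    rw [Real.rpow_neg (by positivity)]
    push_cast; rfl
  unfold zetaTerm
  rw [← ENNReal.ofReal_tsum_of_nonneg (fun n => by positivity) hsum]
  exact ENNReal.ofReal_ne_top

theorem tsum_rpow_eq_toReal (t : ℝ) :
    ∑' n : ℕ, ((n : ℝ) + 1) ^ (-t) = (∑' n, zetaTerm t n).toReal := by
  rw [ENNReal.tsum_toReal_eq (zetaTerm_ne_top t)]
  simp only [toReal_zetaTerm]

theorem zetaTerm_mul_zetaTerm_eq_sum (p q k n : ℕ) :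
    zetaTerm (p + 1 : ℕ) k * zetaTerm (q + 1 : ℕ) n =
      ∑ i ∈ range (q + 1), ((p + i).choose i : ℝ≥0∞) *
          (zetaTerm (p + 1 + i : ℕ) (k + n + 1) * zetaTerm (q + 1 - i : ℕ) n) +
        ∑ i ∈ range (p + 1), ((q + i).choose i : ℝ≥0∞) *
          (zetaTerm (q + 1 + i : ℕ) (k + n + 1) * zetaTerm (p + 1 - i : ℕ) k) := by
  have hsum : ((k + n + 1 : ℕ) : ℝ) + 1 = ((k : ℝ) + 1) + ((n : ℝ) + 1) := by push_cast; ring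
  simp only [zetaTerm_natCast, hsum]
  rw [← ENNReal.ofReal_mul (by positivity),
    inv_pow_mul_inv_pow_eq_sum (by positivity) (by positivity) (by positivity),
    ENNReal.ofReal_add (by positivity) (by positivity),
    ENNReal.ofReal_sum_of_nonneg (fun i _ => by positivity),
    ENNReal.ofReal_sum_of_nonneg (fun i _ => by positivity)]
  simp (disch := positivity) only [ENNReal.ofReal_mul, ENNReal.ofReal_natCast]

/-- `∑_{m > n ≥ 0} f m * g n`, indexed by the gaps as in `zr2`. -/
noncomputable def nestedSum₂ (f g : ℕ → ℝ≥0∞) : ℝ≥0∞ :=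
  ∑' (a : ℕ) (b : ℕ), f (a + b + 1) * g b

/-- `∑_{m > n > r ≥ 0} f m * g n * h r`, indexed by the gaps as in `zr3`. -/
noncomputable def nestedSum₃ (f g h : ℕ → ℝ≥0∞) : ℝ≥0∞ :=
  ∑' (a : ℕ) (b : ℕ) (c : ℕ), f (a + b + c + 2) * g (b + c + 1) * h c

/-- `∑_{l, m, n ≥ 1} f (l + m + n) * g l * h m`, in the shifted indexing of `zetaTerm`. -/
noncomputable def mixedSum (f g h : ℕ → ℝ≥0∞) : ℝ≥0∞ :=
  ∑' (l : ℕ) (m : ℕ) (n : ℕ), f (l + m + n + 2) * g l * h m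

noncomputable def tripleProd (f g h : ℕ → ℝ≥0∞) (x : ℕ × ℕ × ℕ) : ℝ≥0∞ := f x.1 * g x.2.1 * h x.2.2

theorem tsum_mul_nestedSum₂_eq_tsum_prod (f g h : ℕ → ℝ≥0∞) :
    (∑' k, f k) * nestedSum₂ g h =
      ∑' y : ℕ × ℕ × ℕ, f y.1 * g (y.2.1 + y.2.2 + 1) * h y.2.2 := by
  rw [← ENNReal.tsum_mul_right]
  simp only [nestedSum₂, ENNReal.tsum_prod', ← ENNReal.tsum_mul_left, mul_assoc]

section HarmonicProduct

variable (f g h : ℕ → ℝ≥0∞)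

theorem tsum_mul_nestedSum₂_eq_tsum_indicator :
    (∑' k, f k) * nestedSum₂ g h =
      ∑' x, {x : ℕ × ℕ × ℕ | x.2.2 < x.2.1}.indicator (tripleProd f g h) x := by
  rw [tsum_mul_nestedSum₂_eq_tsum_prod, ← tsum_comp_eq_tsum_indicator
    (φ := fun y => (y.1, y.2.1 + y.2.2 + 1, y.2.2)) (ψ := fun x => (x.1, x.2.1 - x.2.2 - 1, x.2.2))
    (fun _ => by grind) (fun _ => by grind)]
  rfl

theorem nestedSum₃_eq_tsum_indicator :
    nestedSum₃ f g h =
      ∑' x, {x : ℕ × ℕ × ℕ | x.2.2 < x.2.1 ∧ x.2.1 < x.1}.indicator (tripleProd f g h) x := by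
  rw [← tsum_comp_eq_tsum_indicator
    (φ := fun y => (y.1 + y.2.1 + y.2.2 + 2, y.2.1 + y.2.2 + 1, y.2.2))
    (ψ := fun x => (x.1 - x.2.1 - 1, x.2.1 - x.2.2 - 1, x.2.2))
    (fun _ => by grind) (fun _ => by grind)]
  simp only [nestedSum₃, ENNReal.tsum_prod', tripleProd]

theorem nestedSum₃_swap_eq_tsum_indicator :
    nestedSum₃ g f h =
      ∑' x, {x : ℕ × ℕ × ℕ | x.2.2 < x.1 ∧ x.1 < x.2.1}.indicator (tripleProd f g h) x := by
  rw [← tsum_comp_eq_tsum_indicator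
    (φ := fun y => (y.2.1 + y.2.2 + 1, y.1 + y.2.1 + y.2.2 + 2, y.2.2))
    (ψ := fun x => (x.2.1 - x.1 - 1, x.1 - x.2.2 - 1, x.2.2))
    (fun _ => by grind) (fun _ => by grind)]
  simp only [nestedSum₃, ENNReal.tsum_prod', tripleProd]
  exact tsum_congr fun _ => tsum_congr fun _ => tsum_congr fun _ => by ring_nf

theorem nestedSum₃_rotate_eq_tsum_indicator :
    nestedSum₃ g h f =
      ∑' x, {x : ℕ × ℕ × ℕ | x.1 < x.2.2 ∧ x.2.2 < x.2.1}.indicator (tripleProd f g h) x := by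
  rw [← tsum_comp_eq_tsum_indicator
    (φ := fun y => (y.2.2, y.1 + y.2.1 + y.2.2 + 2, y.2.1 + y.2.2 + 1))
    (ψ := fun x => (x.2.1 - x.2.2 - 1, x.2.2 - x.1 - 1, x.1))
    (fun _ => by grind) (fun _ => by grind)]
  simp only [nestedSum₃, ENNReal.tsum_prod', tripleProd]
  exact tsum_congr fun _ => tsum_congr fun _ => tsum_congr fun _ => by ring_nf

theorem nestedSum₂_mul_left_eq_tsum_indicator :
    nestedSum₂ (f * g) h =
      ∑' x, {x : ℕ × ℕ × ℕ | x.2.2 < x.1 ∧ x.1 = x.2.1}.indicator (tripleProd f g h) x := by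
  rw [← tsum_comp_eq_tsum_indicator (φ := fun y => (y.1 + y.2 + 1, y.1 + y.2 + 1, y.2))
    (ψ := fun x => (x.1 - x.2.2 - 1, x.2.2)) (fun _ => by grind) (fun _ => by grind)]
  simp only [nestedSum₂, ENNReal.tsum_prod', tripleProd, Pi.mul_apply]

theorem nestedSum₂_mul_right_eq_tsum_indicator :
    nestedSum₂ g (f * h) =
      ∑' x, {x : ℕ × ℕ × ℕ | x.1 = x.2.2 ∧ x.2.2 < x.2.1}.indicator (tripleProd f g h) x := by
  rw [← tsum_comp_eq_tsum_indicator (φ := fun y => (y.2, y.1 + y.2 + 1, y.2))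
    (ψ := fun x => (x.2.1 - x.2.2 - 1, x.2.2)) (fun _ => by grind) (fun _ => by grind)]
  simp only [nestedSum₂, ENNReal.tsum_prod', tripleProd, Pi.mul_apply]
  exact tsum_congr fun _ => tsum_congr fun _ => by ring

theorem tsum_mul_nestedSum₂ :
    (∑' k, f k) * nestedSum₂ g h =
      nestedSum₃ f g h + nestedSum₃ g f h + nestedSum₃ g h f + nestedSum₂ (f * g) h +
        nestedSum₂ g (f * h) := by
  rw [tsum_mul_nestedSum₂_eq_tsum_indicator, nestedSum₃_eq_tsum_indicator,
    nestedSum₃_swap_eq_tsum_indicator, nestedSum₃_rotate_eq_tsum_indicator,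
    nestedSum₂_mul_left_eq_tsum_indicator, nestedSum₂_mul_right_eq_tsum_indicator,
    ← ENNReal.tsum_add, ← ENNReal.tsum_add, ← ENNReal.tsum_add, ← ENNReal.tsum_add]
  refine tsum_congr fun x => ?_
  simp only [Set.indicator_apply, Set.mem_ofPred_eq]
  split_ifs <;> first | omega | simp

end HarmonicProduct

theorem tsum_zetaTerm_mul_nestedSum₂ (p q : ℕ) (h : ℕ → ℝ≥0∞) :
    (∑' k, zetaTerm (p + 1 : ℕ) k) * nestedSum₂ (zetaTerm (q + 1 : ℕ)) h =
      ∑ i ∈ range (q + 1), ((p + i).choose i : ℝ≥0∞) *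
          nestedSum₃ (zetaTerm (p + 1 + i : ℕ)) (zetaTerm (q + 1 - i : ℕ)) h +
        ∑ i ∈ range (p + 1), ((q + i).choose i : ℝ≥0∞) *
          mixedSum (zetaTerm (q + 1 + i : ℕ)) (zetaTerm (p + 1 - i : ℕ)) h := by
  simp only [tsum_mul_nestedSum₂_eq_tsum_prod, zetaTerm_mul_zetaTerm_eq_sum, add_mul, sum_mul]
  rw [ENNReal.tsum_add, Summable.tsum_finsetSum fun _ _ => ENNReal.summable,
    Summable.tsum_finsetSum fun _ _ => ENNReal.summable]
  congr 1 <;> refine sum_congr rfl fun i _ => ?_ <;>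
    simp only [mul_assoc, ENNReal.tsum_mul_left, nestedSum₃, mixedSum, ENNReal.tsum_prod']
  · exact congrArg _ <| tsum_congr fun _ => tsum_congr fun _ => tsum_congr fun _ => by ring_nf
  · refine congrArg _ <| tsum_congr fun _ => ?_
    rw [ENNReal.tsum_comm]
    exact tsum_congr fun _ => tsum_congr fun _ => by ring_nf

theorem nestedSum₂_le_tsum_mul_tsum {g : ℕ → ℝ≥0∞} (hg : Antitone g) (h : ℕ → ℝ≥0∞) :
    nestedSum₂ g h ≤ (∑' n, g n) * ∑' n, h n := by
  rw [← ENNReal.tsum_mul_right]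
  refine ENNReal.tsum_le_tsum fun a => ?_
  rw [← ENNReal.tsum_mul_left]
  exact ENNReal.tsum_le_tsum fun b => by gcongr; exact hg (by omega)

theorem nestedSum₂_zetaTerm_ne_top {t₁ t₂ : ℝ} (h₁ : 1 < t₁) (h₂ : 1 < t₂) :
    nestedSum₂ (zetaTerm t₁) (zetaTerm t₂) ≠ ∞ :=
  ne_top_of_le_ne_top
    (ENNReal.mul_ne_top (tsum_zetaTerm_ne_top h₁) (tsum_zetaTerm_ne_top h₂))
    (nestedSum₂_le_tsum_mul_tsum (antitone_zetaTerm (by linarith)) _)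

theorem zr2_eq_toReal {s₁ s₂ : ℝ} (h : nestedSum₂ (zetaTerm s₁) (zetaTerm s₂) ≠ ∞) :
    zr2 s₁ s₂ = (nestedSum₂ (zetaTerm s₁) (zetaTerm s₂)).toReal := by
  rw [nestedSum₂, ENNReal.tsum₂_toReal_eq h]
  refine tsum_congr fun a => tsum_congr fun b => ?_
  rw [ENNReal.toReal_mul, toReal_zetaTerm, toReal_zetaTerm]
  push_cast; ring_nf

theorem zr3_eq_toReal {s₁ s₂ s₃ : ℝ}
    (h : nestedSum₃ (zetaTerm s₁) (zetaTerm s₂) (zetaTerm s₃) ≠ ∞) :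
    zr3 s₁ s₂ s₃ = (nestedSum₃ (zetaTerm s₁) (zetaTerm s₂) (zetaTerm s₃)).toReal := by
  rw [nestedSum₃, ENNReal.tsum₃_toReal_eq h]
  refine tsum_congr fun a => tsum_congr fun b => tsum_congr fun c => ?_
  rw [ENNReal.toReal_mul, ENNReal.toReal_mul, toReal_zetaTerm, toReal_zetaTerm, toReal_zetaTerm]
  push_cast; ring_nf

theorem tsum_rpow_eq_mixedSum_toReal {t₁ t₂ t₃ : ℝ}
    (h : mixedSum (zetaTerm t₁) (zetaTerm t₂) (zetaTerm t₃) ≠ ∞) :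
    ∑' (l : ℕ) (m : ℕ) (n : ℕ),
        ((l : ℝ) + (m : ℝ) + (n : ℝ) + 3) ^ (-t₁) * ((l : ℝ) + 1) ^ (-t₂) * ((m : ℝ) + 1) ^ (-t₃) =
      (mixedSum (zetaTerm t₁) (zetaTerm t₂) (zetaTerm t₃)).toReal := by
  rw [mixedSum, ENNReal.tsum₃_toReal_eq h]
  refine tsum_congr fun l => tsum_congr fun m => tsum_congr fun n => ?_
  rw [ENNReal.toReal_mul, ENNReal.toReal_mul, toReal_zetaTerm, toReal_zetaTerm, toReal_zetaTerm]
  push_cast; ring_nf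

theorem tsum_rpow_mul_zr2 {t₁ t₂ t₃ : ℝ} (h₁ : 1 < t₁) (h₂ : 1 < t₂) (h₃ : 1 < t₃) :
    (∑' n : ℕ, ((n : ℝ) + 1) ^ (-t₁)) * zr2 t₂ t₃ =
      zr3 t₁ t₂ t₃ + zr3 t₂ t₁ t₃ + zr3 t₂ t₃ t₁ + zr2 (t₁ + t₂) t₃ + zr2 t₂ (t₁ + t₃) := by
  have key := tsum_mul_nestedSum₂ (zetaTerm t₁) (zetaTerm t₂) (zetaTerm t₃)
  rw [zetaTerm_mul, zetaTerm_mul] at key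
  have hfin := key ▸ ENNReal.mul_ne_top (tsum_zetaTerm_ne_top h₁) (nestedSum₂_zetaTerm_ne_top h₂ h₃)
  simp only [ENNReal.add_ne_top] at hfin
  obtain ⟨⟨⟨⟨h₁₂₃, h₂₁₃⟩, h₂₃₁⟩, h₁₂⟩, h₁₃⟩ := hfin
  rw [tsum_rpow_eq_toReal, zr2_eq_toReal (nestedSum₂_zetaTerm_ne_top h₂ h₃), ← ENNReal.toReal_mul,
    key, zr3_eq_toReal h₁₂₃, zr3_eq_toReal h₂₁₃, zr3_eq_toReal h₂₃₁, zr2_eq_toReal h₁₂,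
    zr2_eq_toReal h₁₃, ENNReal.toReal_add (by finiteness) h₁₃, ENNReal.toReal_add (by finiteness) h₁₂,
    ENNReal.toReal_add (by finiteness) h₂₃₁, ENNReal.toReal_add h₁₂₃ h₂₁₃]

theorem tsum_rpow_mul_zr2_eq_sum {p q : ℕ} (hp : 0 < p) (hq : 0 < q) {s : ℝ} (hs : 1 < s) :
    (∑' n : ℕ, ((n : ℝ) + 1) ^ (-((p + 1 : ℕ) : ℝ))) * zr2 ((q + 1 : ℕ) : ℝ) s =
      ∑ i ∈ range (q + 1), ((p + i).choose i : ℝ) *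
          zr3 ((p + 1 + i : ℕ) : ℝ) ((q + 1 - i : ℕ) : ℝ) s +
        ∑ i ∈ range (p + 1), ((q + i).choose i : ℝ) *
          ∑' (l : ℕ) (m : ℕ) (n : ℕ),
            ((l : ℝ) + (m : ℝ) + (n : ℝ) + 3) ^ (-((q + 1 + i : ℕ) : ℝ)) *
              ((l : ℝ) + 1) ^ (-((p + 1 - i : ℕ) : ℝ)) * ((m : ℝ) + 1) ^ (-s) := by
  have h₁ : (1 : ℝ) < (p + 1 : ℕ) := by exact_mod_cast Nat.succ_lt_succ hp
  have h₂ : (1 : ℝ) < (q + 1 : ℕ) := by exact_mod_cast Nat.succ_lt_succ hq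
  have key := tsum_zetaTerm_mul_nestedSum₂ p q (zetaTerm s)
  have hfin := key ▸ ENNReal.mul_ne_top (tsum_zetaTerm_ne_top h₁) (nestedSum₂_zetaTerm_ne_top h₂ hs)
  obtain ⟨hS₁, hS₂⟩ := ENNReal.add_ne_top.mp hfin
  rw [tsum_rpow_eq_toReal, zr2_eq_toReal (nestedSum₂_zetaTerm_ne_top h₂ hs), ← ENNReal.toReal_mul,
    key, ENNReal.toReal_add hS₁ hS₂, ENNReal.toReal_sum_natCast_mul hS₁,
    ENNReal.toReal_sum_natCast_mul hS₂]
  congr 1 <;> refine sum_congr rfl fun i hi => ?_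
  · rw [zr3_eq_toReal (ne_top_of_sum_choose_mul_ne_top hS₁ hi)]
  · rw [tsum_rpow_eq_mixedSum_toReal (ne_top_of_sum_choose_mul_ne_top hS₂ hi)]

theorem functional_double_shuffle (p₁ p₂ : ℕ) (hp₁ : 2 ≤ p₁) (hp₂ : 2 ≤ p₂)
    (s : ℝ) (hs : 1 < s) :
    (∑ i ∈ Finset.range p₂, (Nat.choose (p₁ - 1 + i) i : ℝ) *
        zr3 ((p₁ + i : ℕ) : ℝ) ((p₂ - i : ℕ) : ℝ) s) +
      (∑ i ∈ Finset.range p₁, (Nat.choose (p₂ - 1 + i) i : ℝ) *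
        ∑' (l : ℕ) (m : ℕ) (n : ℕ),
          ((l : ℝ) + (m : ℝ) + (n : ℝ) + 3) ^ (-((p₂ + i : ℕ) : ℝ)) *
            ((l : ℝ) + 1) ^ (-((p₁ - i : ℕ) : ℝ)) * ((m : ℝ) + 1) ^ (-s)) =
    zr3 (p₁ : ℝ) (p₂ : ℝ) s + zr3 (p₂ : ℝ) (p₁ : ℝ) s + zr3 (p₂ : ℝ) s (p₁ : ℝ) +
      zr2 ((p₁ + p₂ : ℕ) : ℝ) s + zr2 (p₂ : ℝ) ((p₁ : ℝ) + s) := by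
  obtain ⟨p, rfl⟩ : ∃ p, p₁ = p + 1 := ⟨p₁ - 1, by omega⟩
  obtain ⟨q, rfl⟩ : ∃ q, p₂ = q + 1 := ⟨p₂ - 1, by omega⟩
  have h₁ : (1 : ℝ) < (p + 1 : ℕ) := by exact_mod_cast hp₁
  have h₂ : (1 : ℝ) < (q + 1 : ℕ) := by exact_mod_cast hp₂
  simp only [Nat.add_sub_cancel]
  rw [← tsum_rpow_mul_zr2_eq_sum (by omega) (by omega) hs, tsum_rpow_mul_zr2 h₁ h₂ hs,
    Nat.cast_add (p + 1) (q + 1)]
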